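/- In the universal enveloping algebra U(g_ω), the elements C := ι(P₀)² − ι(P₁)² − ι(P₂)² + ω (ι(J)² − ι(K₁)² − ι(K₂)²) and W := −ι(J)ι(P₀) + ι(K₁)ι(P₂) − ι(K₂)ι(P₁) are central: C and W commute with ι(Z) for every Z ∈ g_ω (equivalently, with each of ι(J), ι(P₀), ι(P₁), ι(P₂), ι(K₁), ι(K₂)). -/

import Mathlib

attribute [local instance 100] LieRing.ofAssociativeRing

/-!
Commuting with `ι Z` is linear in `Z`, so it suffices to treat the six basis vectors. For a
generator `X`, expand `X * C`, `C * X` (and likewise for `W`) and bring every monomial into normal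
order `J < P0 < P1 < P2 < K1 < K2` using only `y x = x y - ⁅x, y⁆`; the two sides become the same
linear combination of ordered monomials. This uses nothing but the bracket relations, so it is
done for any six elements of an associative algebra satisfying them.
-/

open Submodule in
theorem LinearMap.commute_apply_of_span_eq_top {R L A : Type*} [CommSemiring R] [AddCommMonoid L]
    [Module R L] [Semiring A] [Algebra R A] (f : L →ₗ[R] A) {s : Set L} (hs : span R s = ⊤)
    {a : A} (h : ∀ x ∈ s, Commute a (f x)) (z : L) : Commute a (f z) := by
  have hle : span R s ≤ (Subalgebra.centralizer R {a}).toSubmodule.comap f :=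
    span_le.mpr fun x hx ↦ (Subalgebra.mem_centralizer_iff R).mpr <| by rintro _ rfl; exact h x hx
  exact (Subalgebra.mem_centralizer_iff R).mp (hle (hs ▸ mem_top)) a rfl

theorem mul_swap_of_lie_eq {A : Type*} [Ring A] {x y z : A} (h : ⁅x, y⁆ = z) :
    y * x = x * y - z ∧ ∀ t, y * (x * t) = x * (y * t) - z * t := by
  have hswap : y * x = x * y - z := by rw [← h, Ring.lie_def, sub_sub_cancel]
  exact ⟨hswap, fun t ↦ by rw [← mul_assoc, hswap, sub_mul, mul_assoc]⟩

namespace GOmega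

structure Relations {R L : Type*} [CommRing R] [LieRing L] [LieAlgebra R L] (ω : R)
    (J P0 P1 P2 K1 K2 : L) : Prop where
  lie_J_P1 : ⁅J, P1⁆ = P2
  lie_J_P2 : ⁅J, P2⁆ = -P1
  lie_J_K1 : ⁅J, K1⁆ = K2
  lie_J_K2 : ⁅J, K2⁆ = -K1
  lie_J_P0 : ⁅J, P0⁆ = 0
  lie_P1_K1 : ⁅P1, K1⁆ = -P0
  lie_P2_K2 : ⁅P2, K2⁆ = -P0
  lie_P1_K2 : ⁅P1, K2⁆ = 0
  lie_P2_K1 : ⁅P2, K1⁆ = 0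
  lie_P0_K1 : ⁅P0, K1⁆ = -P1
  lie_P0_K2 : ⁅P0, K2⁆ = -P2
  lie_K1_K2 : ⁅K1, K2⁆ = -J
  lie_P0_P1 : ⁅P0, P1⁆ = ω • K1
  lie_P0_P2 : ⁅P0, P2⁆ = ω • K2
  lie_P1_P2 : ⁅P1, P2⁆ = -(ω • J)

theorem Relations.map {R L L' : Type*} [CommRing R] [LieRing L] [LieAlgebra R L] [LieRing L']
    [LieAlgebra R L'] {ω : R} {J P0 P1 P2 K1 K2 : L} (h : Relations ω J P0 P1 P2 K1 K2)
    (f : L →ₗ⁅R⁆ L') : Relations ω (f J) (f P0) (f P1) (f P2) (f K1) (f K2) := by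
  obtain ⟨h₁, h₂, h₃, h₄, h₅, h₆, h₇, h₈, h₉, h₁₀, h₁₁, h₁₂, h₁₃, h₁₄, h₁₅⟩ := h
  constructor <;> simp only [← LieHom.map_lie, map_neg, map_smul, map_zero, *]

variable {R A : Type*} [CommRing R] [Ring A] [Algebra R A]

def casimirC (ω : R) (J P0 P1 P2 K1 K2 : A) : A :=
  P0 * P0 - P1 * P1 - P2 * P2 + ω • (J * J - K1 * K1 - K2 * K2)

def casimirW (J P0 P1 P2 K1 K2 : A) : A :=
  -(J * P0) + K1 * P2 - K2 * P1

theorem Relations.commute_casimir {ω : R} {J P0 P1 P2 K1 K2 : A}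
    (h : Relations ω J P0 P1 P2 K1 K2) :
    ∀ X ∈ ({J, P0, P1, P2, K1, K2} : Set A),
      Commute (casimirC ω J P0 P1 P2 K1 K2) X ∧ Commute (casimirW J P0 P1 P2 K1 K2) X := by
  rintro X (rfl | rfl | rfl | rfl | rfl | rfl) <;>
  simp only [Commute, SemiconjBy, casimirC, casimirW, mul_add, add_mul, mul_sub, sub_mul,
    mul_neg, neg_mul, smul_mul_assoc, mul_smul_comm, smul_sub, smul_neg, mul_assoc, zero_mul,
    sub_zero,
    mul_swap_of_lie_eq h.lie_J_P1, mul_swap_of_lie_eq h.lie_J_P2, mul_swap_of_lie_eq h.lie_J_K1,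
    mul_swap_of_lie_eq h.lie_J_K2, mul_swap_of_lie_eq h.lie_J_P0, mul_swap_of_lie_eq h.lie_P1_K1,
    mul_swap_of_lie_eq h.lie_P2_K2, mul_swap_of_lie_eq h.lie_P1_K2, mul_swap_of_lie_eq h.lie_P2_K1,
    mul_swap_of_lie_eq h.lie_P0_K1, mul_swap_of_lie_eq h.lie_P0_K2, mul_swap_of_lie_eq h.lie_K1_K2,
    mul_swap_of_lie_eq h.lie_P0_P1, mul_swap_of_lie_eq h.lie_P0_P2, mul_swap_of_lie_eq h.lie_P1_P2] <;>
  constructor <;> module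

end GOmega

theorem casimirs_central_g_omega
    (ω : ℝ) (g : Type*) [LieRing g] [LieAlgebra ℝ g]
    (J P0 P1 P2 K1 K2 : g)
    (hspan : Submodule.span ℝ (Set.range ![J, P0, P1, P2, K1, K2]) = ⊤)
    (hJP1 : ⁅J, P1⁆ = P2) (hJP2 : ⁅J, P2⁆ = -P1)
    (hJK1 : ⁅J, K1⁆ = K2) (hJK2 : ⁅J, K2⁆ = -K1) (hJP0 : ⁅J, P0⁆ = 0)
    (hP1K1 : ⁅P1, K1⁆ = -P0) (hP2K2 : ⁅P2, K2⁆ = -P0)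
    (hP1K2 : ⁅P1, K2⁆ = 0) (hP2K1 : ⁅P2, K1⁆ = 0)
    (hP0K1 : ⁅P0, K1⁆ = -P1) (hP0K2 : ⁅P0, K2⁆ = -P2)
    (hK1K2 : ⁅K1, K2⁆ = -J)
    (hP0P1 : ⁅P0, P1⁆ = ω • K1) (hP0P2 : ⁅P0, P2⁆ = ω • K2)
    (hP1P2 : ⁅P1, P2⁆ = -(ω • J)) :
    let ι : g →ₗ⁅ℝ⁆ UniversalEnvelopingAlgebra ℝ g := UniversalEnvelopingAlgebra.ι ℝ
    let C : UniversalEnvelopingAlgebra ℝ g :=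
      ι P0 * ι P0 - ι P1 * ι P1 - ι P2 * ι P2
        + ω • (ι J * ι J - ι K1 * ι K1 - ι K2 * ι K2)
    let W : UniversalEnvelopingAlgebra ℝ g :=
      -(ι J * ι P0) + ι K1 * ι P2 - ι K2 * ι P1
    ∀ Z : g, C * ι Z = ι Z * C ∧ W * ι Z = ι Z * W := by
  intro ι C W Z
  have hrel : GOmega.Relations ω J P0 P1 P2 K1 K2 := ⟨hJP1, hJP2, hJK1, hJK2, hJP0, hP1K1, hP2K2,
    hP1K2, hP2K1, hP0K1, hP0K2, hK1K2, hP0P1, hP0P2, hP1P2⟩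
  have hbasis : ∀ x ∈ Set.range ![J, P0, P1, P2, K1, K2], Commute C (ι x) ∧ Commute W (ι x) := by
    rintro - ⟨i, rfl⟩
    exact (hrel.map ι).commute_casimir _ (by fin_cases i <;> simp)
  exact ⟨ι.toLinearMap.commute_apply_of_span_eq_top hspan (fun x hx ↦ (hbasis x hx).1) Z,
    ι.toLinearMap.commute_apply_of_span_eq_top hspan (fun x hx ↦ (hbasis x hx).2) Z⟩
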